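/- Let f be a normal function with hyperation F, let g be a left adjoint of f, and let G be the cohyperation of g. Then for all ordinals ξ < ζ: G ξ ∘ F ζ = F (ζ - ξ) and G ζ ∘ F ξ = G (ζ - ξ), where ζ - ξ denotes the unique ordinal η with ξ + η = ζ. -/

import Mathlib

open Ordinal

/-- An ordinal function is *initial* if it maps every initial segment onto an initial segment. -/
def Initial (g : Ordinal → Ordinal) : Prop :=
  ∀ β : Ordinal, ∃ γ : Ordinal, g '' {α | α < β} = {α | α < γ}

/-- A *weak hyperation* of a normal function `f`. -/
def WeakHyperation (f : Ordinal → Ordinal) (g : Ordinal → Ordinal → Ordinal) : Prop :=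
  (∀ ξ : Ordinal, Order.IsNormal (g ξ)) ∧ g 0 = id ∧ g 1 = f ∧
    ∀ ξ ζ : Ordinal, g (ξ + ζ) = g ξ ∘ g ζ

/-- `F` is *the hyperation* of `f`: the pointwise minimal weak hyperation. -/
def IsHyperation (f : Ordinal → Ordinal) (F : Ordinal → Ordinal → Ordinal) : Prop :=
  WeakHyperation f F ∧
    ∀ h : Ordinal → Ordinal → Ordinal, WeakHyperation f h → ∀ ξ ζ : Ordinal, F ξ ζ ≤ h ξ ζ

/-- A *weak cohyperation* of an initial function `f`. -/
def WeakCohyperation (f : Ordinal → Ordinal) (g : Ordinal → Ordinal → Ordinal) : Prop :=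
  (∀ ξ : Ordinal, Initial (g ξ)) ∧ g 0 = id ∧ g 1 = f ∧
    ∀ ξ ζ : Ordinal, g (ξ + ζ) = g ζ ∘ g ξ

/-- `G` is *the cohyperation* of `f`: the pointwise maximal weak cohyperation. -/
def IsCohyperation (f : Ordinal → Ordinal) (G : Ordinal → Ordinal → Ordinal) : Prop :=
  WeakCohyperation f G ∧
    ∀ h : Ordinal → Ordinal → Ordinal, WeakCohyperation f h → ∀ ξ α : Ordinal, h ξ α ≤ G ξ α

/-- `g` is a *left adjoint* of `f`. -/
def LeftAdjoint (f g : Ordinal → Ordinal) : Prop :=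
  ∀ α β : Ordinal, (α = f β → g α = β) ∧ (α < f β → g α < β)

/-!
Every `G ξ` is a left inverse of `F ξ`, and both identities follow from this by additivity. Along
with it one proves, by induction on `ξ`, that the fixed points of `G ξ` are fixed by `F ξ`. Both
properties pass from `ξ` and `ζ` to `ξ + ζ` because initial functions are deflationary, and for
`ξ = 1` they are the adjunction, so only additively principal `ξ = l > 1` needs work.

For such `l`, `F l` is the enumeration `Φ` of the common fixed points of the `F η`, `η < l`: it is
at least `Φ` because its values are such fixed points, and at most `Φ` by minimality, since
`l * (ω * u + m) + r ↦ F (l * (ω * u)) ∘ Φ^[m] ∘ F r` (`r < l`) is a weak hyperation of `f`.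
Dually, `y₀ = min_{η<l} G η y` is a common fixed point of the `G η`, hence by induction a value of
`Φ`, and `G l y = G l y₀` with `y₀ ≤ y`. So `G l ∘ Φ` is initial, whence `G l ∘ Φ ≤ id`; and
`G l ∘ Φ ≥ id` by maximality of `G`, comparing it with the weak cohyperation
`l * m + r ↦ G r ∘ ψ^[m]` (constantly `0` from `l * ω` on), where `ψ y = Φ⁻¹ y₀`.
-/

open Function Set MulOpposite

universe u v

namespace Ordinal

/-- A finite ordinal as a natural number; `0` on infinite ordinals. -/
noncomputable def toNat (o : Ordinal) : ℕ := o.card.toNat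

@[simp]
theorem toNat_natCast (n : ℕ) : toNat n = n := by
  simp [toNat]

theorem exists_eq_omega0_mul_add_natCast (q : Ordinal) :
    ∃ (u : Ordinal) (m : ℕ), q = ω * u + m := by
  obtain ⟨m, hm⟩ := lt_omega0.1 (mod_lt q omega0_ne_zero)
  exact ⟨q / ω, m, by rw [← hm, div_add_mod]⟩

theorem exists_add_eq_of_not_isPrincipal {ξ : Ordinal} (h : ¬ IsPrincipal (· + ·) ξ) :
    ∃ a < ξ, ∃ b < ξ, a + b = ξ := by
  simp only [IsPrincipal, not_forall, not_lt] at h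
  obtain ⟨a, b, ha, hb, hab⟩ := h
  exact ⟨a, ha, ξ - a, (sub_le.2 hab).trans_lt hb, Ordinal.add_sub_cancel_of_le ha.le⟩

end Ordinal

section Splice

variable {M : Type*} [Monoid M] {b : Ordinal} {A B : Ordinal → M}

noncomputable def splice (b : Ordinal) (A B : Ordinal → M) (ξ : Ordinal) : M :=
  B (ξ / b) * A (ξ % b)

theorem splice_mul_add (hb : b ≠ 0) (q : Ordinal) {r : Ordinal} (hr : r < b) :
    splice b A B (b * q + r) = B q * A r := by
  rw [splice, mul_add_div q hb, div_eq_zero_of_lt hr, add_zero, mul_add_mod_self, mod_eq_of_lt hr]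

theorem splice_add (hb : IsPrincipal (· + ·) b) (hb0 : b ≠ 0)
    (hA : ∀ r < b, ∀ s < b, A (r + s) = A r * A s) (hB : ∀ q q', B (q + q') = B q * B q')
    (hB0 : B 0 = 1) (hAB : ∀ r < b, ∀ q ≠ 0, A r * B q = B q) (ξ ζ : Ordinal) :
    splice b A B (ξ + ζ) = splice b A B ξ * splice b A B ζ := by
  obtain ⟨q, r, hr, rfl⟩ : ∃ q r, r < b ∧ b * q + r = ξ := ⟨_, _, mod_lt ξ hb0, div_add_mod ξ b⟩
  obtain ⟨q', r', hr', rfl⟩ : ∃ q r, r < b ∧ b * q + r = ζ := ⟨_, _, mod_lt ζ hb0, div_add_mod ζ b⟩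
  rw [splice_mul_add hb0 q hr, splice_mul_add hb0 q' hr']
  rcases eq_or_ne q' 0 with rfl | hq'
  · rw [mul_zero, zero_add, add_assoc, splice_mul_add hb0 q (hb hr hr'), hB0, one_mul,
      hA r hr r' hr', mul_assoc]
  · have hr_abs : r + b * q' = b * q' :=
      hb.add_eq_right_of_le hr (le_mul_left b (pos_iff_ne_zero.2 hq'))
    rw [add_assoc, ← add_assoc r, hr_abs, ← add_assoc, ← mul_add, splice_mul_add hb0 _ hr', hB,
      mul_assoc, mul_assoc (B q) (A r), ← mul_assoc (A r), hAB r hr q' hq']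

noncomputable def ladder (b : Ordinal) (A : Ordinal → M) (x : M) (C : Ordinal → M) : Ordinal → M :=
  splice b A (splice ω (fun k => x ^ k.toNat) C)

variable {x : M} {C : Ordinal → M}

theorem ladder_mul_add (hb : b ≠ 0) (u : Ordinal) (m : ℕ) {r : Ordinal} (hr : r < b) :
    ladder b A x C (b * (ω * u + m) + r) = C u * x ^ m * A r := by
  rw [ladder, splice_mul_add hb _ hr, splice_mul_add omega0_ne_zero u (natCast_lt_omega0 m),
    toNat_natCast]

theorem ladder_of_lt {r : Ordinal} (hr : r < b) : ladder b A x C r = C 0 * A r := by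
  simpa using ladder_mul_add (A := A) (x := x) (C := C) hr.ne_bot 0 0 hr

theorem ladder_self (hb : b ≠ 0) : ladder b A x C b = C 0 * x * A 0 := by
  simpa using ladder_mul_add (A := A) (x := x) (C := C) hb 0 1 (pos_iff_ne_zero.2 hb)

theorem ladder_mem (S : Submonoid M) (hb : b ≠ 0) (hA : ∀ r < b, A r ∈ S) (hx : x ∈ S)
    (hC : ∀ u, C u ∈ S) (ξ : Ordinal) : ladder b A x C ξ ∈ S :=
  S.mul_mem (S.mul_mem (hC _) (S.pow_mem hx _)) (hA _ (mod_lt ξ hb))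

theorem ladder_add (hb : IsPrincipal (· + ·) b) (hb0 : b ≠ 0)
    (hA : ∀ r < b, ∀ s < b, A (r + s) = A r * A s) (hC : ∀ u u', C (u + u') = C u * C u')
    (hC0 : C 0 = 1) (hxC : ∀ u ≠ 0, x * C u = C u) (hAx : ∀ r < b, A r * x = x)
    (hAC : ∀ r < b, ∀ u ≠ 0, A r * C u = C u) (ξ ζ : Ordinal) :
    ladder b A x C (ξ + ζ) = ladder b A x C ξ * ladder b A x C ζ := by
  have hpowC : ∀ (m : ℕ), ∀ u ≠ 0, x ^ m * C u = C u := by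
    intro m u hu
    induction m with
    | zero => rw [pow_zero, one_mul]
    | succ m ih => rw [pow_succ, mul_assoc, hxC u hu, ih]
  refine splice_add hb hb0 hA (splice_add isPrincipal_add_omega0 omega0_ne_zero ?_ hC hC0 ?_)
    ?_ ?_ ξ ζ
  · intro r hr s hs
    obtain ⟨m, rfl⟩ := lt_omega0.1 hr
    obtain ⟨n, rfl⟩ := lt_omega0.1 hs
    rw [← Nat.cast_add, toNat_natCast, toNat_natCast, toNat_natCast, pow_add]
  · exact fun _ _ u hu => hpowC _ u hu
  · simp [splice, hC0, Ordinal.toNat]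
  · intro r hr q hq
    obtain ⟨u, m, rfl⟩ := exists_eq_omega0_mul_add_natCast q
    rw [splice_mul_add omega0_ne_zero u (natCast_lt_omega0 m), toNat_natCast]
    rcases eq_or_ne u 0 with rfl | hu
    · obtain ⟨m, rfl⟩ := Nat.exists_eq_succ_of_ne_zero (show m ≠ 0 by rintro rfl; simp at hq)
      rw [hC0, one_mul, pow_succ', ← mul_assoc, hAx r hr]
    · rw [← mul_assoc, hAC r hr u hu]

end Splice

section Initial

variable {g h : Ordinal.{u} → Ordinal.{u}}

theorem initial_iff : Initial g ↔ ∀ x, ∀ a < g x, ∃ y < x, g y = a := by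
  constructor
  · intro hg x a ha
    obtain ⟨γ, hγ⟩ := hg (x + 1)
    have hgx : g x < γ := by
      change g x ∈ {α | α < γ}
      rw [← hγ]
      exact mem_image_of_mem g (lt_add_one x)
    obtain ⟨y, hy, rfl⟩ : a ∈ g '' {α | α < x + 1} := by
      rw [hγ]
      exact ha.trans hgx
    exact ⟨y, (Order.lt_add_one_iff.1 hy).lt_of_ne (by rintro rfl; exact ha.false), rfl⟩
  · intro hg β
    set S := g '' {α | α < β}
    have hdown : ∀ a b, a < b → b ∈ S → a ∈ S := by
      rintro a _ hab ⟨y, hy, rfl⟩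
      obtain ⟨z, hz, rfl⟩ := hg y a hab
      exact ⟨z, hz.trans hy, rfl⟩
    obtain ⟨c, hc⟩ : BddAbove S := bddAbove_image.{u, u} bddAbove_Iio g
    have hne : Sᶜ.Nonempty := ⟨c + 1, fun h => (lt_add_one c).not_ge (hc h)⟩
    refine ⟨sInf Sᶜ, Set.ext fun x => ⟨fun hx => ?_, fun hx => ?_⟩⟩
    · exact lt_of_not_ge fun h => csInf_mem hne (h.lt_or_eq.elim (hdown _ _ · hx) (· ▸ hx))
    · exact by_contra fun h => (csInf_le' h).not_gt (show x < sInf Sᶜ from hx)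

theorem Initial.apply_le (hg : Initial g) (x : Ordinal) : g x ≤ x := by
  induction x using WellFoundedLT.induction with
  | _ x ih =>
    by_contra! hx
    obtain ⟨y, hy, hyx⟩ := initial_iff.1 hg x x hx
    exact (ih y hy).not_gt (hyx ▸ hy)

theorem Initial.comp (hg : Initial g) (hh : Initial h) : Initial (h ∘ g) := fun β => by
  obtain ⟨γ, hγ⟩ := hg β
  obtain ⟨δ, hδ⟩ := hh γ
  exact ⟨δ, by rw [image_comp, hγ, hδ]⟩

theorem initial_id : Initial (id : Ordinal.{u} → Ordinal.{u}) :=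
  initial_iff.2 fun _ u hu => ⟨u, hu, rfl⟩

theorem initial_const_zero : Initial fun _ : Ordinal.{u} => (0 : Ordinal.{u}) :=
  initial_iff.2 fun _ _ hu => absurd hu not_lt_zero

def initialFunctions : Submonoid (Function.End Ordinal.{u})ᵐᵒᵖ where
  carrier := {f | Initial f.unop}
  mul_mem' {f g} hf hg := show Initial (g.unop ∘ f.unop) from hf.comp hg
  one_mem' := initial_id

end Initial

def normalFunctions : Submonoid (Function.End Ordinal.{u}) where
  carrier := {f | Order.IsNormal f}
  mul_mem' hf hg := Order.IsNormal.comp hf hg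
  one_mem' := Order.IsNormal.id

section Hyperation

variable {f : Ordinal.{u} → Ordinal.{u}} {F : Ordinal.{v} → Ordinal.{u} → Ordinal.{u}}
  {Φ : Ordinal.{u} → Ordinal.{u}} {l : Ordinal.{v}}

theorem WeakHyperation.apply_add (hF : WeakHyperation f F) (ξ ζ : Ordinal.{v}) (x : Ordinal.{u}) :
    F (ξ + ζ) x = F ξ (F ζ x) :=
  congrFun (hF.2.2.2 ξ ζ) x

theorem WeakHyperation.apply_apply_of_lt (hF : WeakHyperation f F) (hl : IsPrincipal (· + ·) l)
    {η : Ordinal.{v}} (hη : η < l) (x : Ordinal.{u}) : F η (F l x) = F l x := by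
  rw [← hF.apply_add, hl.add_eq_right hη]

theorem WeakHyperation.apply_mem_fixedPoints (hF : WeakHyperation f F) (hl : IsPrincipal (· + ·) l)
    (x : Ordinal.{u}) : F l x ∈ ⋂ η < l, fixedPoints (F η) :=
  mem_iInter₂.2 fun _ hη => hF.apply_apply_of_lt hl hη x

theorem WeakHyperation.not_bddAbove_fixedPoints (hF : WeakHyperation f F)
    (hl : IsPrincipal (· + ·) l) : ¬ BddAbove (⋂ η < l, fixedPoints (F η)) := fun hb =>
  (hF.1 l).strictMono.not_bddAbove_range_of_wellFoundedLT
    (hb.mono (range_subset_iff.2 (hF.apply_mem_fixedPoints hl)))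

noncomputable def hyperationWith (F : Ordinal.{v} → Ordinal.{u} → Ordinal.{u})
    (Φ : Ordinal.{u} → Ordinal.{u}) (l : Ordinal.{v}) : Ordinal.{v} → Ordinal.{u} → Ordinal.{u} :=
  ladder (M := Function.End Ordinal.{u}) l F Φ fun u => F (l * (ω * u))

theorem hyperationWith_of_lt (hF0 : F 0 = id) {r : Ordinal.{v}} (hr : r < l) :
    hyperationWith F Φ l r = F r :=
  (ladder_of_lt (M := Function.End Ordinal.{u}) hr).trans (by rw [mul_zero, mul_zero, hF0]; rfl)

theorem hyperationWith_self (hF0 : F 0 = id) (hl : l ≠ 0) : hyperationWith F Φ l l = Φ :=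
  (ladder_self (M := Function.End Ordinal.{u}) hl).trans (by rw [mul_zero, mul_zero, hF0]; rfl)

theorem weakHyperation_hyperationWith (hF : WeakHyperation f F) (hl : IsPrincipal (· + ·) l)
    (hl1 : 1 < l) (hΦ : Order.IsNormal Φ) (hFΦ : ∀ r < l, ∀ x, F r (Φ x) = Φ x)
    (hΦF : ∀ x, F l x = x → Φ x = x) : WeakHyperation f (hyperationWith F Φ l) := by
  have hl0 : l ≠ 0 := (zero_lt_one.trans hl1).ne'
  have hF0 : F 0 = id := hF.2.1
  have hlωu : ∀ u ≠ 0, l ≤ l * (ω * u) := fun u hu =>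
    le_mul_left l (omega0_pos.trans_le (le_mul_left ω (pos_iff_ne_zero.2 hu)))
  refine ⟨fun ξ => ladder_mem (M := Function.End Ordinal.{u}) normalFunctions hl0
      (fun r _ => hF.1 r) hΦ (fun u => hF.1 _) ξ,
    by rw [hyperationWith_of_lt hF0 (zero_lt_one.trans hl1), hF0],
    by rw [hyperationWith_of_lt hF0 hl1, hF.2.2.1],
    ladder_add (M := Function.End Ordinal.{u}) hl hl0 (fun r _ s _ => hF.2.2.2 r s)
      (fun u u' => ?_) (by simp only [mul_zero, hF0]; rfl) (fun u hu => ?_) (fun r hr => ?_)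
      (fun r hr u hu => ?_)⟩
  · rw [mul_add, mul_add]
    exact hF.2.2.2 _ _
  · funext x
    refine hΦF _ ?_
    show F l (F _ x) = _
    rw [← hF.apply_add, ← mul_one_add,
      one_add_of_omega0_le (le_mul_left ω (pos_iff_ne_zero.2 hu))]
  · funext x
    exact hFΦ r hr x
  · funext x
    show F r (F _ x) = F _ x
    rw [← hF.apply_add, hl.add_eq_right_of_le hr (hlωu u hu)]

-- Not `derivFamily`: the indices live in `Ordinal.{v}`, so `Iio l` need not be `u`-small.
theorem IsHyperation.apply_eq_enumOrd (hF : IsHyperation f F) (hl : IsPrincipal (· + ·) l)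
    (hl1 : 1 < l) : F l = enumOrd (⋂ η < l, fixedPoints (F η)) := by
  set D := ⋂ η < l, fixedPoints (F η)
  have hD := hF.1.not_bddAbove_fixedPoints hl
  have hle : enumOrd D ≤ F l := by
    conv_rhs => rw [← enumOrd_range (hF.1.1 l).strictMono]
    exact enumOrd_le_of_subset (hF.1.1 l).strictMono.not_bddAbove_range_of_wellFoundedLT
      (range_subset_iff.2 (hF.1.apply_mem_fixedPoints hl))
  have hnormal : Order.IsNormal (enumOrd D) := by
    refine isNormal_enumOrd (fun t ht htne htb => mem_iInter₂.2 fun η hη => ?_) hD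
    have hfix : ∀ x ∈ t, F η x = x := fun x hx => mem_iInter₂.1 (ht hx) η hη
    show F η (sSup t) = sSup t
    rw [(hF.1.1 η).map_sSup htne htb, image_congr hfix, image_id']
  refine le_antisymm (fun x => ?_) hle
  calc F l x ≤ hyperationWith F (enumOrd D) l l x :=
        hF.2 _ (weakHyperation_hyperationWith hF.1 hl hl1 hnormal
          (fun r hr y => mem_iInter₂.1 (enumOrd_mem hD y) r hr)
          (fun y hy => ((hle y).trans_eq hy).antisymm hnormal.strictMono.le_apply)) l x
    _ = enumOrd D x := by rw [hyperationWith_self hF.1.2.1 (zero_lt_one.trans hl1).ne']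

end Hyperation

section Cohyperation

variable {g : Ordinal.{u} → Ordinal.{u}} {G : Ordinal.{v} → Ordinal.{u} → Ordinal.{u}}
  {h : Ordinal.{u} → Ordinal.{u}} {l : Ordinal.{v}}

theorem WeakCohyperation.apply_add (hG : WeakCohyperation g G) (ξ ζ : Ordinal.{v})
    (x : Ordinal.{u}) : G (ξ + ζ) x = G ζ (G ξ x) :=
  congrFun (hG.2.2.2 ξ ζ) x

theorem WeakCohyperation.apply_le (hG : WeakCohyperation g G) (ξ : Ordinal.{v})
    (x : Ordinal.{u}) : G ξ x ≤ x :=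
  (hG.1 ξ).apply_le x

theorem WeakCohyperation.apply_le_apply (hG : WeakCohyperation g G) {ξ ζ : Ordinal.{v}}
    (hξζ : ξ ≤ ζ) (x : Ordinal.{u}) : G ζ x ≤ G ξ x := by
  rw [← Ordinal.add_sub_cancel_of_le hξζ, hG.apply_add]
  exact hG.apply_le _ _

theorem WeakCohyperation.apply_apply_of_lt (hG : WeakCohyperation g G)
    (hl : IsPrincipal (· + ·) l) {η : Ordinal.{v}} (hη : η < l) (x : Ordinal.{u}) :
    G l (G η x) = G l x := by
  rw [← hG.apply_add, hl.add_eq_right hη]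

noncomputable def cohyperationWith (G : Ordinal.{v} → Ordinal.{u} → Ordinal.{u})
    (h : Ordinal.{u} → Ordinal.{u}) (l : Ordinal.{v}) : Ordinal.{v} → Ordinal.{u} → Ordinal.{u} :=
  fun ξ => unop <| ladder (M := (Function.End Ordinal.{u})ᵐᵒᵖ) l (fun r => op (G r)) (op h)
    (fun u => if u = 0 then 1 else op fun _ => 0) ξ

theorem cohyperationWith_of_lt {r : Ordinal.{v}} (hr : r < l) :
    cohyperationWith G h l r = G r := by
  unfold cohyperationWith
  rw [ladder_of_lt hr, if_pos rfl, one_mul]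
  rfl

theorem cohyperationWith_self (hG0 : G 0 = id) (hl : l ≠ 0) : cohyperationWith G h l l = h := by
  unfold cohyperationWith
  rw [ladder_self hl, if_pos rfl, one_mul, hG0]
  rfl

theorem weakCohyperation_cohyperationWith (hG : WeakCohyperation g G)
    (hl : IsPrincipal (· + ·) l) (hl1 : 1 < l) (hh : Initial h)
    (hhG : ∀ r < l, ∀ x, h (G r x) = h x) : WeakCohyperation g (cohyperationWith G h l) := by
  have hl0 : l ≠ 0 := (zero_lt_one.trans hl1).ne'
  have hG0 : G 0 = id := hG.2.1
  refine ⟨fun ξ => ladder_mem (M := (Function.End Ordinal.{u})ᵐᵒᵖ) initialFunctions hl0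
      (fun r _ => hG.1 r) hh (fun u => ?_) ξ,
    by rw [cohyperationWith_of_lt (zero_lt_one.trans hl1), hG0],
    by rw [cohyperationWith_of_lt hl1, hG.2.2.1],
    fun ξ ζ => congrArg unop <| ladder_add (M := (Function.End Ordinal.{u})ᵐᵒᵖ) hl hl0
      (fun r _ s _ => ?_) (fun u u' => ?_) (if_pos rfl) (fun u hu => ?_) (fun r hr => ?_)
      (fun r hr u hu => ?_) ξ ζ⟩
  · split_ifs
    exacts [initialFunctions.one_mem, initial_const_zero]
  · exact congrArg op (hG.2.2.2 r s)
  · rcases eq_or_ne u' 0 with rfl | hu'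
    · simp only [add_zero, ↓reduceIte, mul_one]
    · rw [if_neg (by simp [hu']), if_neg hu']
      split_ifs <;> rfl
  · rw [if_neg hu]
    rfl
  · exact congrArg op (funext (hhG r hr))
  · rw [if_neg hu]
    rfl

noncomputable def infBelow (G : Ordinal.{v} → Ordinal.{u} → Ordinal.{u}) (l : Ordinal.{v})
    (x : Ordinal.{u}) : Ordinal.{u} :=
  ⨅ η : Iio l, G η x

theorem infBelow_le_apply {η : Ordinal.{v}} (hη : η < l) (x : Ordinal.{u}) :
    infBelow G l x ≤ G η x :=
  ciInf_le' _ (⟨η, hη⟩ : Iio l)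

theorem exists_apply_eq_infBelow (hl0 : l ≠ 0) (x : Ordinal.{u}) :
    ∃ η < l, G η x = infBelow G l x := by
  have : Nonempty (Iio l) := ⟨⟨0, pos_iff_ne_zero.2 hl0⟩⟩
  obtain ⟨⟨η, hη⟩, hηx⟩ := ciInf_mem fun η : Iio l => G η x
  exact ⟨η, hη, hηx⟩

theorem infBelow_eq_self (hl0 : l ≠ 0) {x : Ordinal.{u}} (hx : ∀ η < l, G η x = x) :
    infBelow G l x = x := by
  obtain ⟨η, hη, hηx⟩ := exists_apply_eq_infBelow hl0 x
  rw [← hηx, hx η hη]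

theorem WeakCohyperation.infBelow_le (hG : WeakCohyperation g G) (hl0 : l ≠ 0) (x : Ordinal.{u}) :
    infBelow G l x ≤ x := by
  obtain ⟨η, -, hηx⟩ := exists_apply_eq_infBelow hl0 x
  exact hηx ▸ hG.apply_le η x

theorem WeakCohyperation.apply_infBelow_of_lt (hG : WeakCohyperation g G)
    (hl : IsPrincipal (· + ·) l) {η : Ordinal.{v}} (hη : η < l) (x : Ordinal.{u}) :
    G η (infBelow G l x) = infBelow G l x := by
  obtain ⟨ζ, hζ, hζx⟩ := exists_apply_eq_infBelow hη.ne_bot x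
  rw [← hζx, ← hG.apply_add]
  exact (hG.apply_le_apply le_self_add x).antisymm (hζx ▸ infBelow_le_apply (hl hζ hη) x)

theorem WeakCohyperation.apply_infBelow_self (hG : WeakCohyperation g G)
    (hl : IsPrincipal (· + ·) l) (hl0 : l ≠ 0) (x : Ordinal.{u}) :
    G l (infBelow G l x) = G l x := by
  obtain ⟨η, hη, hηx⟩ := exists_apply_eq_infBelow hl0 x
  rw [← hηx, hG.apply_apply_of_lt hl hη]

theorem WeakCohyperation.infBelow_apply (hG : WeakCohyperation g G)
    (hl : IsPrincipal (· + ·) l) {η : Ordinal.{v}} (hη : η < l) (x : Ordinal.{u}) :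
    infBelow G l (G η x) = infBelow G l x := by
  have : Nonempty (Iio l) := ⟨⟨η, hη⟩⟩
  obtain ⟨ζ, hζ, hζx⟩ := exists_apply_eq_infBelow hη.ne_bot x
  refine le_antisymm ?_ (le_ciInf fun ζ => ?_)
  · calc infBelow G l (G η x) ≤ G ζ (G η x) := infBelow_le_apply hζ _
      _ = G (η + ζ) x := (hG.apply_add η ζ x).symm
      _ ≤ G ζ x := hG.apply_le_apply le_add_self x
      _ = infBelow G l x := hζx
  · rw [← hG.apply_add]
    exact infBelow_le_apply (hl hη ζ.2) x

theorem IsCohyperation.le_apply_of_isPrincipal (hG : IsCohyperation g G)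
    (hl : IsPrincipal (· + ·) l) (hl1 : 1 < l) {Φ : Ordinal.{u} → Ordinal.{u}} (hΦ : StrictMono Φ)
    (hGΦ : ∀ η < l, ∀ a, G η (Φ a) = Φ a) (hrange : ∀ x, infBelow G l x ∈ range Φ)
    (a : Ordinal.{u}) : a ≤ G l (Φ a) := by
  have hl0 : l ≠ 0 := (zero_lt_one.trans hl1).ne'
  choose ψ hψ using hrange
  have hψΦ : ∀ a, ψ (Φ a) = a := fun a =>
    hΦ.injective (by rw [hψ, infBelow_eq_self hl0 (hGΦ · · a)])
  have hψ_initial : Initial ψ := initial_iff.2 fun x b hb =>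
    ⟨Φ b, (hΦ hb).trans_le ((hψ x).trans_le (hG.1.infBelow_le hl0 x)), hψΦ b⟩
  have hψG : ∀ r < l, ∀ x, ψ (G r x) = ψ x := fun r hr x =>
    hΦ.injective (by rw [hψ, hψ, hG.1.infBelow_apply hl hr])
  calc a = cohyperationWith G ψ l l (Φ a) := by rw [cohyperationWith_self hG.1.2.1 hl0, hψΦ]
    _ ≤ G l (Φ a) :=
      hG.2 _ (weakCohyperation_cohyperationWith hG.1 hl hl1 hψ_initial hψG) l (Φ a)

end Cohyperation

section Retraction

variable {f g : Ordinal.{u} → Ordinal.{u}} {F G : Ordinal.{v} → Ordinal.{u} → Ordinal.{u}}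

theorem LeftAdjoint.leftInverse (hg : LeftAdjoint f g) : LeftInverse g f :=
  fun a => (hg (f a) a).1 rfl

theorem LeftAdjoint.fixedPoints_subset (hg : LeftAdjoint f g) (hf : Order.IsNormal f) :
    fixedPoints g ⊆ fixedPoints f := fun x hx =>
  (hf.strictMono.le_apply.lt_or_eq.resolve_left fun h => ((hg x x).2 h).ne hx).symm

theorem leftInverse_and_fixedPoints_subset_add (hF : WeakHyperation f F)
    (hG : WeakCohyperation g G) {ξ ζ : Ordinal.{v}}
    (hξ : LeftInverse (G ξ) (F ξ) ∧ fixedPoints (G ξ) ⊆ fixedPoints (F ξ))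
    (hζ : LeftInverse (G ζ) (F ζ) ∧ fixedPoints (G ζ) ⊆ fixedPoints (F ζ)) :
    LeftInverse (G (ξ + ζ)) (F (ξ + ζ)) ∧ fixedPoints (G (ξ + ζ)) ⊆ fixedPoints (F (ξ + ζ)) := by
  refine ⟨fun x => by rw [hG.apply_add, hF.apply_add, hξ.1, hζ.1], fun x hx => ?_⟩
  replace hx : G ζ (G ξ x) = x := (hG.apply_add ξ ζ x).symm.trans hx
  have hξx : G ξ x = x := (hG.apply_le ξ x).antisymm (hx.symm.trans_le (hG.apply_le ζ _))
  rw [hξx] at hx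
  show F (ξ + ζ) x = x
  rw [hF.apply_add, hζ.2 hx, hξ.2 hξx]

theorem leftInverse_and_fixedPoints_subset_of_isPrincipal (hF : IsHyperation f F)
    (hG : IsCohyperation g G) {l : Ordinal.{v}} (hl : IsPrincipal (· + ·) l) (hl1 : 1 < l)
    (ih : ∀ η < l, LeftInverse (G η) (F η) ∧ fixedPoints (G η) ⊆ fixedPoints (F η)) :
    LeftInverse (G l) (F l) ∧ fixedPoints (G l) ⊆ fixedPoints (F l) := by
  have hl0 : l ≠ 0 := (zero_lt_one.trans hl1).ne'
  set D := ⋂ η < l, fixedPoints (F η)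
  have hD := hF.1.not_bddAbove_fixedPoints hl
  have hFl : F l = enumOrd D := hF.apply_eq_enumOrd hl hl1
  have hGΦ : ∀ η < l, ∀ a, G η (enumOrd D a) = enumOrd D a := fun η hη a => by
    conv_lhs => rw [← mem_iInter₂.1 (enumOrd_mem hD a) η hη]
    exact (ih η hη).1 _
  have hrange : ∀ x, infBelow G l x ∈ range (enumOrd D) := fun x => by
    rw [range_enumOrd hD]
    exact mem_iInter₂.2 fun η hη => (ih η hη).2 (hG.1.apply_infBelow_of_lt hl hη x)
  have hstab : ∀ x, ∃ a, enumOrd D a ≤ x ∧ G l (enumOrd D a) = G l x := fun x => by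
    obtain ⟨a, ha⟩ := hrange x
    exact ⟨a, ha ▸ hG.1.infBelow_le hl0 x, ha ▸ hG.1.apply_infBelow_self hl hl0 x⟩
  have hinv : ∀ a, G l (enumOrd D a) = a := by
    have hinitial : Initial (G l ∘ enumOrd D) := initial_iff.2 fun a b hb => by
      obtain ⟨x, hx, rfl⟩ := initial_iff.1 (hG.1.1 l) _ _ hb
      obtain ⟨c, hcx, hc⟩ := hstab x
      exact ⟨c, (enumOrd_lt_enumOrd hD).1 (hcx.trans_lt hx), hc⟩
    exact fun a => (hinitial.apply_le a).antisymm
      (hG.le_apply_of_isPrincipal hl hl1 (enumOrd_strictMono hD) hGΦ hrange a)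
  refine ⟨fun a => by rw [hFl]; exact hinv a, fun x hx => ?_⟩
  obtain ⟨a, hax, ha⟩ := hstab x
  obtain rfl : a = x := by rw [← hinv a, ha]; exact hx
  show F l a = a
  rw [hFl]
  exact hax.antisymm (enumOrd_strictMono hD).le_apply

theorem leftInverse_and_fixedPoints_subset (hF : IsHyperation f F) (hG : IsCohyperation g G)
    (hg : LeftAdjoint f g) (ξ : Ordinal.{v}) :
    LeftInverse (G ξ) (F ξ) ∧ fixedPoints (G ξ) ⊆ fixedPoints (F ξ) := by
  induction ξ using WellFoundedLT.induction with
  | _ ξ ih =>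
  by_cases hξ : IsPrincipal (· + ·) ξ
  · rcases le_or_gt ξ 1 with hξ1 | hξ1
    · rcases Order.le_one_iff.1 hξ1 with rfl | rfl
      · rw [hF.1.2.1, hG.1.2.1]
        exact ⟨fun _ => rfl, subset_rfl⟩
      · rw [hF.1.2.2.1, hG.1.2.2.1]
        exact ⟨hg.leftInverse, hg.fixedPoints_subset (hF.1.2.2.1 ▸ hF.1.1 1)⟩
    · exact leftInverse_and_fixedPoints_subset_of_isPrincipal hF hG hξ hξ1 ih
  · obtain ⟨a, ha, b, hb, rfl⟩ := exists_add_eq_of_not_isPrincipal hξ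
    exact leftInverse_and_fixedPoints_subset_add hF.1 hG.1 (ih a ha) (ih b hb)

end Retraction

theorem cohyperation_hyperation_comp_general (f : Ordinal → Ordinal)
    (F : Ordinal → Ordinal → Ordinal) (hF : IsHyperation f F)
    (g : Ordinal → Ordinal) (hg : LeftAdjoint f g)
    (G : Ordinal → Ordinal → Ordinal) (hG : IsCohyperation g G) :
    ∀ ξ ζ : Ordinal, ξ < ζ →
      G ξ ∘ F ζ = F (ζ - ξ) ∧ G ζ ∘ F ξ = G (ζ - ξ) := by
  intro ξ ζ hξζ
  obtain ⟨η, rfl⟩ : ∃ η, ζ = ξ + η := ⟨ζ - ξ, (Ordinal.add_sub_cancel_of_le hξζ.le).symm⟩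
  have hinv : G ξ ∘ F ξ = id := (leftInverse_and_fixedPoints_subset hF hG hg ξ).1.comp_eq_id
  rw [Ordinal.add_sub_cancel]
  constructor
  · rw [hF.1.2.2.2, ← comp_assoc, hinv, id_comp]
  · rw [hG.1.2.2.2, comp_assoc, hinv, comp_id]

theorem cohyperation_hyperation_comp (f : Ordinal → Ordinal) (hf : Order.IsNormal f)
    (F : Ordinal → Ordinal → Ordinal) (hF : IsHyperation f F)
    (g : Ordinal → Ordinal) (hg : LeftAdjoint f g)
    (G : Ordinal → Ordinal → Ordinal) (hG : IsCohyperation g G) :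
    ∀ ξ ζ : Ordinal, ξ < ζ →
      G ξ ∘ F ζ = F (ζ - ξ) ∧ G ζ ∘ F ξ = G (ζ - ξ) :=
  cohyperation_hyperation_comp_general f F hF g hg G hG
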